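/- arXiv:2502.01086 — 2 statements merged into one kernel-verified Lean document; each statement's English description precedes it below -/
import Mathlib

section
/- If a 4-coloring of [4n+r] (0 ≤ r ≤ 3) with colors {A,B,C,D,E} extended by coloring all elements of {4n+r+1, ..., 5n+r} with a fifth color E contains a rainbow AP(5), then the original 4-coloring of [4n+r] contains a rainbow AP(4). Consequently, appending a monochromatic block in a new color to a rainbow-AP(4)-free coloring yields a rainbow-AP(5)-free coloring. -/
inductive Color5 | A | B | C | D | E
  deriving DecidableEq

open Color5

/-- A coloring `c` of `{1,...,n}` contains a rainbow 4-term AP. -/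
def RainbowAP4 (n : ℕ) (c : ℕ → Color5) : Prop :=
  ∃ t d : ℕ, 1 ≤ t ∧ 1 ≤ d ∧ t + 3*d ≤ n ∧
    c t ≠ c (t+d) ∧ c t ≠ c (t+2*d) ∧ c t ≠ c (t+3*d) ∧
    c (t+d) ≠ c (t+2*d) ∧ c (t+d) ≠ c (t+3*d) ∧ c (t+2*d) ≠ c (t+3*d)

/-- A coloring `c` of `{1,...,n}` contains a rainbow 5-term AP. -/
def RainbowAP5 (n : ℕ) (c : ℕ → Color5) : Prop :=
  ∃ t d : ℕ, 1 ≤ t ∧ 1 ≤ d ∧ t + 4*d ≤ n ∧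
    ∀ i j : Fin 5, i ≠ j → c (t + (i : ℕ)*d) ≠ c (t + (j : ℕ)*d)

theorem stmt_12 (n r : ℕ) (hn : 1 ≤ n) (hr : r ≤ 3) (c : ℕ → Color5)
    (hc : ∀ i, 1 ≤ i → i ≤ 4*n + r → c i ≠ E) :
    (RainbowAP5 (5*n + r) (fun i => if i ≤ 4*n + r then c i else E) →
      RainbowAP4 (4*n + r) c) ∧
    (¬ RainbowAP4 (4*n + r) c →
      ¬ RainbowAP5 (5*n + r) (fun i => if i ≤ 4*n + r then c i else E)) := by
  have key : RainbowAP5 (5*n + r) (fun i => if i ≤ 4*n + r then c i else E) →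
      RainbowAP4 (4*n + r) c := by
    rintro ⟨t, d, ht, hd, hle, hpair⟩
    have h34 := hpair 3 4 (by decide)
    have h3 : t + 3*d ≤ 4*n + r := by
      by_contra h
      push_neg at h
      have h4 : ¬ (t + 4*d ≤ 4*n + r) := by omega
      simp only [show ((3:Fin 5):ℕ)=3 from rfl, show ((4:Fin 5):ℕ)=4 from rfl] at h34
      rw [if_neg (by omega), if_neg h4] at h34
      exact h34 rfl
    have v0 : t ≤ 4*n + r := by omega
    have v1 : t + d ≤ 4*n + r := by omega
    have v2 : t + 2*d ≤ 4*n + r := by omega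
    have fv : ∀ i : Fin 5, (i : ℕ) = i.val := fun _ => rfl
    refine ⟨t, d, ht, hd, h3, ?_, ?_, ?_, ?_, ?_, ?_⟩
    · have := hpair 0 1 (by decide)
      simp only [show ((0:Fin 5):ℕ)=0 from rfl, show ((1:Fin 5):ℕ)=1 from rfl,
        zero_mul, add_zero, one_mul, v0, v1, if_true, if_pos] at this
      exact this
    · have := hpair 0 2 (by decide)
      simp only [show ((0:Fin 5):ℕ)=0 from rfl, show ((2:Fin 5):ℕ)=2 from rfl,
        zero_mul, add_zero, v0, v2, if_true, if_pos] at this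
      exact this
    · have := hpair 0 3 (by decide)
      simp only [show ((0:Fin 5):ℕ)=0 from rfl, show ((3:Fin 5):ℕ)=3 from rfl,
        zero_mul, add_zero, v0, h3, if_true, if_pos] at this
      exact this
    · have := hpair 1 2 (by decide)
      simp only [show ((1:Fin 5):ℕ)=1 from rfl, show ((2:Fin 5):ℕ)=2 from rfl,
        one_mul, v1, v2, if_true, if_pos] at this
      exact this
    · have := hpair 1 3 (by decide)
      simp only [show ((1:Fin 5):ℕ)=1 from rfl, show ((3:Fin 5):ℕ)=3 from rfl,
        one_mul, v1, h3, if_true, if_pos] at this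
      exact this
    · have := hpair 2 3 (by decide)
      simp only [show ((2:Fin 5):ℕ)=2 from rfl, show ((3:Fin 5):ℕ)=3 from rfl,
        v2, h3, if_true, if_pos] at this
      exact this
  exact ⟨key, fun h h5 => h (key h5)⟩
end

section
/- For every positive integer k, the 4-coloring of Z_{24k} obtained by repeating k times the block ν = (B,D,A,D,C,A,C,B,A,B,D,B,C,D,C,A,D,A,B,A,C,B,C,D) (i.e., coloring i by ν(i mod 24)) is equinumerous and contains no rainbow 4-term arithmetic progression in Z_{24k}. -/
inductive Color | A | B | C | D
  deriving DecidableEq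

open Color

/-- The 24-periodic color pattern of Conlon, Jungić and Radoičić. -/
def nuList : List Color :=
  [B, D, A, D, C, A, C, B, A, B, D, B, C, D, C, A, D, A, B, A, C, B, C, D]

/-- The coloring of `ZMod (24*k)` repeating the pattern `k` times. -/
def col (k : ℕ) (x : ZMod (24*k)) : Color := nuList.getD (x.val % 24) A

def col24 (y : ZMod 24) : Color := nuList.getD y.val A

lemma col_eq_col24 (k : ℕ) [NeZero (24*k)] (x : ZMod (24*k)) :
    col k x = col24 (ZMod.castHom (dvd_mul_right 24 k) (ZMod 24) x) := by
  unfold col col24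
  congr 1
  rw [ZMod.castHom_apply, ← ZMod.natCast_val, ZMod.val_natCast]

lemma no_rainbow24 : ∀ y e : ZMod 24,
    ¬ (col24 y ≠ col24 (y + e) ∧ col24 y ≠ col24 (y + 2*e) ∧ col24 y ≠ col24 (y + 3*e) ∧
       col24 (y + e) ≠ col24 (y + 2*e) ∧ col24 (y + e) ≠ col24 (y + 3*e) ∧
       col24 (y + 2*e) ≠ col24 (y + 3*e)) := by decide

def prodSubtypeSnd {α β : Type*} (P : β → Prop) :
    {p : α × β // P p.2} ≃ α × {b // P b} where
  toFun p := (p.1.1, ⟨p.1.2, p.2⟩)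
  invFun p := ⟨(p.1, p.2.1), p.2.2⟩
  left_inv p := rfl
  right_inv p := rfl

theorem stmt_18 (k : ℕ) (hk : 0 < k) :
    (∀ x : Color, Nat.card {i : ZMod (24*k) // col k i = x} = 6*k) ∧
    ¬ ∃ x d : ZMod (24*k),
      (x ≠ x + d ∧ x ≠ x + 2*d ∧ x ≠ x + 3*d ∧
       x + d ≠ x + 2*d ∧ x + d ≠ x + 3*d ∧ x + 2*d ≠ x + 3*d) ∧
      (col k x ≠ col k (x + d) ∧ col k x ≠ col k (x + 2*d) ∧ col k x ≠ col k (x + 3*d) ∧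
       col k (x + d) ≠ col k (x + 2*d) ∧ col k (x + d) ≠ col k (x + 3*d) ∧
       col k (x + 2*d) ≠ col k (x + 3*d)) := by
  haveI : NeZero (24*k) := ⟨by positivity⟩
  constructor
  · intro x
    -- the equiv Fin k × Fin 24 ≃ ZMod (24*k)
    have hcard : Fintype.card (Fin k × Fin 24) = Fintype.card (ZMod (24*k)) := by
      simp [ZMod.card, mul_comm]
    let f : Fin k × Fin 24 → ZMod (24*k) := fun p => ((p.2 : ℕ) + 24 * (p.1 : ℕ) : ℕ)
    have hlt : ∀ p : Fin k × Fin 24, (p.2 : ℕ) + 24 * (p.1 : ℕ) < 24 * k := fun p => by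
      calc (p.2 : ℕ) + 24 * (p.1 : ℕ) < 24 + 24 * (p.1 : ℕ) := by
            exact Nat.add_lt_add_right p.2.2 _
        _ = 24 * ((p.1 : ℕ) + 1) := by ring
        _ ≤ 24 * k := Nat.mul_le_mul_left _ p.1.2
    have hval : ∀ p, (f p).val = (p.2 : ℕ) + 24 * (p.1 : ℕ) := fun p =>
      ZMod.val_cast_of_lt (hlt p)
    have hinj : Function.Injective f := by
      intro p q h
      have h2 : (p.2 : ℕ) + 24 * (p.1 : ℕ) = (q.2 : ℕ) + 24 * (q.1 : ℕ) := by
        rw [← hval p, ← hval q, h]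
      have h3 : (p.2 : ℕ) = (q.2 : ℕ) := by
        have := congrArg (· % 24) h2
        simpa [Nat.add_mul_mod_self_left, Nat.mod_eq_of_lt p.2.2,
          Nat.mod_eq_of_lt q.2.2] using this
      have h4 : (p.1 : ℕ) = (q.1 : ℕ) := by omega
      exact Prod.ext (Fin.ext h4) (Fin.ext h3)
    have hbij : Function.Bijective f :=
      (Fintype.bijective_iff_injective_and_card f).2 ⟨hinj, hcard⟩
    have hcol : ∀ p : Fin k × Fin 24, col k (f p) = nuList.getD (p.2 : ℕ) A := by
      intro p
      unfold col
      rw [hval p]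
      congr 1
      simp [Nat.add_mul_mod_self_left, Nat.mod_eq_of_lt p.2.2]
    let e : Fin k × Fin 24 ≃ ZMod (24*k) := Equiv.ofBijective f hbij
    have e1 : {i : ZMod (24*k) // col k i = x} ≃
        {p : Fin k × Fin 24 // nuList.getD (p.2 : ℕ) A = x} :=
      (Equiv.subtypeEquiv e.symm (fun i => by
        rw [show col k i = col k (e (e.symm i)) by rw [Equiv.apply_symm_apply],
          show (e (e.symm i)) = f (e.symm i) from rfl, hcol])).symm.symm
    have e2 : {p : Fin k × Fin 24 // nuList.getD (p.2 : ℕ) A = x} ≃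
        Fin k × {r : Fin 24 // nuList.getD (r : ℕ) A = x} :=
      prodSubtypeSnd (fun r : Fin 24 => nuList.getD (r : ℕ) A = x)
    rw [Nat.card_eq_fintype_card, Fintype.card_congr (e1.trans e2), Fintype.card_prod,
      Fintype.card_fin]
    have h6 : Fintype.card {r : Fin 24 // nuList.getD (r : ℕ) A = x} = 6 := by
      cases x <;> decide
    rw [h6, mul_comm]
  · rintro ⟨x, d, -, h1, h2, h3, h4, h5, h6⟩
    simp only [col_eq_col24] at h1 h2 h3 h4 h5 h6
    set φ := ZMod.castHom (dvd_mul_right 24 k) (ZMod 24) with hφ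
    have e1 : φ (x + d) = φ x + φ d := map_add _ _ _
    have e2 : φ (x + 2*d) = φ x + 2 * φ d := by rw [map_add, map_mul, map_ofNat]
    have e3 : φ (x + 3*d) = φ x + 3 * φ d := by rw [map_add, map_mul, map_ofNat]
    simp only [e1, e2, e3] at h1 h2 h3 h4 h5 h6
    exact no_rainbow24 (φ x) (φ d) ⟨h1, h2, h3, h4, h5, h6⟩
end
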